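/- For every t ∈ {0,…,T} and every state s ∈ ℕ: 0 ≤ U(t,s) − U^η(t,s) ≤ (T−t)·η, where U is the optimal value function with prices ranging over the full interval [0,𝕍] and U^η is the optimal value function with prices restricted to the grid of multiples of η. -/

import Mathlib

/-! For a fixed price μ accepted with probability g, one step of the recursion pays
`g·(μ + a) + (1 - g)·b`, a convex combination of the continuation values `a` (sale) and `b`
(no sale). Hence the one-step operator is monotone and does not enlarge a uniform gap between
continuation values. Replacing a price μ by the grid point `kη ≤ μ` just below it can only
raise the acceptance probability, since `g` is antitone, and loses less than `η` in revenue, so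
discretizing one step costs at most `η`. Backward induction from the horizon adds `η` per step. -/

open Set

/-- One step of the recursion: `a` is the continuation value after a sale, `b` without one, and
the posted price ranges over the values of `p`. -/
noncomputable def bellman {ι : Sort*} (g : ℝ → ℝ) (p : ι → ℝ) (a b : ℝ) : ℝ :=
  max 0 (⨆ i, g (p i) * (p i + a - b)) + b

lemma max_zero_iSup_le {ι : Sort*} {F : ι → ℝ} {M : ℝ} (hM : 0 ≤ M) (h : ∀ i, F i ≤ M) :
    max 0 (⨆ i, F i) ≤ M :=
  max_le hM (Real.iSup_le h hM)

lemma le_max_zero_ciSup {ι : Sort*} {F : ι → ℝ} (hF : BddAbove (range F)) (i : ι) :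
    F i ≤ max 0 (⨆ i, F i) :=
  (le_ciSup hF i).trans (le_max_right _ _)

lemma mul_le_max_zero {w : ℝ} (h0 : 0 ≤ w) (h1 : w ≤ 1) (x : ℝ) : w * x ≤ max 0 x := by
  rcases le_total x 0 with hx | hx
  · exact (mul_nonpos_of_nonneg_of_nonpos h0 hx).trans (le_max_left _ _)
  · exact (mul_le_of_le_one_left hx h1).trans (le_max_right _ _)

lemma sum_mul_sub_sum_mul_mem_Icc {ι : Type*} {s : Finset ι} {P x y : ι → ℝ}
    (hP : ∀ i ∈ s, 0 ≤ P i) (hPsum : ∑ i ∈ s, P i = 1) {c : ℝ}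
    (h : ∀ i ∈ s, x i - y i ∈ Icc 0 c) :
    ∑ i ∈ s, P i * x i - ∑ i ∈ s, P i * y i ∈ Icc 0 c := by
  have hsub : ∑ i ∈ s, P i * x i - ∑ i ∈ s, P i * y i = ∑ i ∈ s, P i * (x i - y i) := by
    rw [← Finset.sum_sub_distrib]
    simp only [mul_sub]
  rw [hsub]
  refine ⟨Finset.sum_nonneg fun i hi => mul_nonneg (hP i hi) (h i hi).1, ?_⟩
  calc ∑ i ∈ s, P i * (x i - y i) ≤ ∑ i ∈ s, P i * c :=
        Finset.sum_le_sum fun i hi => mul_le_mul_of_nonneg_left (h i hi).2 (hP i hi)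
    _ = c := by rw [← Finset.sum_mul, hPsum, one_mul]

lemma natCast_mul_mem_Icc_of_le_floor {V η : ℝ} (hV : 0 ≤ V) (hη : 0 < η) {k : ℕ}
    (hk : k ≤ ⌊V / η⌋₊) :
    (k : ℝ) * η ∈ Icc 0 V :=
  ⟨by positivity, (le_div_iff₀ hη).1 ((Nat.le_floor_iff (div_nonneg hV hη.le)).1 hk)⟩

lemma exists_grid_le_lt_add {V η : ℝ} (hη : 0 < η) {μ : ℝ} (hμ : μ ∈ Icc 0 V) :
    ∃ k : Fin (⌊V / η⌋₊ + 1), (k.1 : ℝ) * η ≤ μ ∧ μ < k.1 * η + η := by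
  refine ⟨⟨⌊μ / η⌋₊, Nat.lt_succ_of_le (Nat.floor_mono (div_le_div_of_nonneg_right hμ.2 hη.le))⟩,
    ?_, ?_⟩
  · exact (le_div_iff₀ hη).1 (Nat.floor_le (div_nonneg hμ.1 hη.le))
  · have := (div_lt_iff₀ hη).1 (Nat.lt_floor_add_one (μ / η))
    linarith

section Bellman

variable {g : ℝ → ℝ}

lemma bddAbove_range_bellman_summand (hg : ∀ μ, 0 ≤ g μ ∧ g μ ≤ 1) {ι : Sort*} {p : ι → ℝ}
    (hp : BddAbove (range p)) (a b : ℝ) :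
    BddAbove (range fun i => g (p i) * (p i + a - b)) := by
  obtain ⟨M, hM⟩ := hp
  refine ⟨max 0 (M + a - b), ?_⟩
  rintro _ ⟨i, rfl⟩
  have hpi : p i ≤ M := hM ⟨i, rfl⟩
  exact (mul_le_max_zero (hg _).1 (hg _).2 _).trans (max_le_max le_rfl (by linarith))

lemma bellman_sub_bellman_mem_Icc (hg : ∀ μ, 0 ≤ g μ ∧ g μ ≤ 1) {ι : Sort*} {p : ι → ℝ}
    (hp : BddAbove (range p)) {a a' b b' C : ℝ} (ha : a - a' ∈ Icc 0 C) (hb : b - b' ∈ Icc 0 C) :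
    bellman g p a b - bellman g p a' b' ∈ Icc 0 C := by
  obtain ⟨ha0, haC⟩ := ha
  obtain ⟨hb0, hbC⟩ := hb
  have lower : max 0 (⨆ i, g (p i) * (p i + a' - b'))
      ≤ max 0 (⨆ i, g (p i) * (p i + a - b)) + (b - b') := by
    refine max_zero_iSup_le (by positivity) fun i => ?_
    have := le_max_zero_ciSup (bddAbove_range_bellman_summand hg hp a b) i
    have := mul_nonneg (hg (p i)).1 ha0
    have := mul_nonneg (sub_nonneg.2 (hg (p i)).2) hb0
    nlinarith
  have upper : max 0 (⨆ i, g (p i) * (p i + a - b))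
      ≤ max 0 (⨆ i, g (p i) * (p i + a' - b')) + (C - (b - b')) := by
    refine max_zero_iSup_le (by positivity) fun i => ?_
    have := le_max_zero_ciSup (bddAbove_range_bellman_summand hg hp a' b') i
    have := mul_le_mul_of_nonneg_left haC (hg (p i)).1
    have := mul_le_mul_of_nonneg_left hbC (sub_nonneg.2 (hg (p i)).2)
    nlinarith
  unfold bellman
  constructor <;> linarith

lemma bellman_Icc_sub_bellman_grid_mem_Icc {V η : ℝ} (hg : ∀ μ, 0 ≤ g μ ∧ g μ ≤ 1)
    (hgm : Antitone g) (hV : 0 ≤ V) (hη : 0 < η) (a b : ℝ) :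
    bellman g (Subtype.val : Icc 0 V → ℝ) a b
      - bellman g (fun k : Fin (⌊V / η⌋₊ + 1) => (k.1 : ℝ) * η) a b ∈ Icc 0 η := by
  have hbdd := bddAbove_range_bellman_summand hg (p := (Subtype.val : Icc 0 V → ℝ))
    ⟨V, by rintro _ ⟨μ, rfl⟩; exact μ.2.2⟩ a b
  have lower : max 0 (⨆ k : Fin (⌊V / η⌋₊ + 1), g (k.1 * η) * (k.1 * η + a - b))
      ≤ max 0 (⨆ μ : Icc 0 V, g μ.1 * (μ.1 + a - b)) :=
    max_zero_iSup_le (le_max_left _ _) fun k => le_max_zero_ciSup hbdd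
      ⟨_, natCast_mul_mem_Icc_of_le_floor hV hη (Nat.lt_succ_iff.1 k.2)⟩
  have upper : max 0 (⨆ μ : Icc 0 V, g μ.1 * (μ.1 + a - b))
      ≤ max 0 (⨆ k : Fin (⌊V / η⌋₊ + 1), g (k.1 * η) * (k.1 * η + a - b)) + η := by
    refine max_zero_iSup_le (add_nonneg (le_max_left _ _) hη.le) fun μ => ?_
    obtain ⟨k, hkμ, hμk⟩ := exists_grid_le_lt_add hη μ.2
    rcases le_total (μ.1 + a - b) 0 with h | h
    · have := mul_nonpos_of_nonneg_of_nonpos (hg μ.1).1 h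
      have := le_max_left 0 (⨆ k : Fin (⌊V / η⌋₊ + 1), g (k.1 * η) * (k.1 * η + a - b))
      linarith
    · have hrevenue : g (k.1 * η) * (μ.1 - k.1 * η) ≤ η :=
        (mul_le_of_le_one_left (by linarith) (hg _).2).trans (by linarith)
      calc g μ.1 * (μ.1 + a - b) ≤ g (k.1 * η) * (μ.1 + a - b) :=
            mul_le_mul_of_nonneg_right (hgm hkμ) h
        _ = g (k.1 * η) * (k.1 * η + a - b) + g (k.1 * η) * (μ.1 - k.1 * η) := by ring
        _ ≤ _ := add_le_add (le_max_zero_ciSup (F := fun k : Fin (⌊V / η⌋₊ + 1) =>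
            g (k.1 * η) * (k.1 * η + a - b)) (finite_range _).bddAbove k) hrevenue
  unfold bellman
  constructor <;> linarith

lemma bellman_Icc_sub_bellman_grid_mem_Icc_add {V η : ℝ} (hg : ∀ μ, 0 ≤ g μ ∧ g μ ≤ 1)
    (hgm : Antitone g) (hV : 0 ≤ V) (hη : 0 < η) {a a' b b' C : ℝ} (ha : a - a' ∈ Icc 0 C)
    (hb : b - b' ∈ Icc 0 C) :
    bellman g (Subtype.val : Icc 0 V → ℝ) a b
      - bellman g (fun k : Fin (⌊V / η⌋₊ + 1) => (k.1 : ℝ) * η) a' b' ∈ Icc 0 (C + η) := by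
  obtain ⟨h₁, h₂⟩ := bellman_sub_bellman_mem_Icc hg
    (p := (Subtype.val : Icc 0 V → ℝ)) ⟨V, by rintro _ ⟨μ, rfl⟩; exact μ.2.2⟩ ha hb
  obtain ⟨h₃, h₄⟩ := bellman_Icc_sub_bellman_grid_mem_Icc hg hgm hV hη a' b'
  constructor <;> linarith

end Bellman

theorem stmt_16_general
    (T L : ℕ)
    (P : ℕ → ℝ) (hPnn : ∀ ℓ, 0 ≤ P ℓ)
    (hPsum : ∑ ℓ ∈ Finset.Icc 1 L, P ℓ = 1)
    (V : ℝ) (hV : 0 < V) (η : ℝ) (hη : 0 < η)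
    (q : ℝ → ℕ → ℕ → ℝ)
    (hq01 : ∀ μ s ℓ, 0 ≤ q μ s ℓ ∧ q μ s ℓ ≤ 1)
    (hqμ : ∀ μ μ' s ℓ, μ ≤ μ' → q μ' s ℓ ≤ q μ s ℓ)
    -- optimal value function with prices in [0, V]
    (U : ℕ → ℕ → ℝ)
    (hUT : ∀ s, U T s = 0)
    (hU : ∀ t, t < T → ∀ s, U t s =
      ∑ ℓ ∈ Finset.Icc 1 L, P ℓ *
        (max 0 (⨆ μ : Set.Icc (0 : ℝ) V,
            q μ.1 s ℓ * (μ.1 + U (t + 1) (s + ℓ - 1) - U (t + 1) (s - 1)))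
          + U (t + 1) (s - 1)))
    -- optimal value function with prices on the grid {k·η : k·η ≤ V}
    (Ug : ℕ → ℕ → ℝ)
    (hUgT : ∀ s, Ug T s = 0)
    (hUg : ∀ t, t < T → ∀ s, Ug t s =
      ∑ ℓ ∈ Finset.Icc 1 L, P ℓ *
        (max 0 (⨆ k : Fin (Nat.floor (V / η) + 1),
            q (k.1 * η) s ℓ * (k.1 * η + Ug (t + 1) (s + ℓ - 1) - Ug (t + 1) (s - 1)))
          + Ug (t + 1) (s - 1))) :
    ∀ t, t ≤ T → ∀ s : ℕ,
      0 ≤ U t s - Ug t s ∧ U t s - Ug t s ≤ ((T - t : ℕ) : ℝ) * η := by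
  intro t ht
  induction ht using Nat.decreasingInduction with
  | self => intro s; simp [hUT, hUgT]
  | of_succ t htT ih =>
    intro s
    have hsteps : ((T - t : ℕ) : ℝ) * η = ((T - (t + 1) : ℕ) : ℝ) * η + η := by
      rw [show T - t = T - (t + 1) + 1 by omega]
      push_cast
      ring
    rw [hU t htT s, hUg t htT s, hsteps]
    exact sum_mul_sub_sum_mul_mem_Icc (fun ℓ _ => hPnn ℓ) hPsum fun ℓ _ =>
      bellman_Icc_sub_bellman_grid_mem_Icc_add (fun μ => hq01 μ s ℓ)
        (fun μ μ' h => hqμ μ μ' s ℓ h) hV.le hη (ih (s + ℓ - 1)) (ih (s - 1))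

/-- Price-grid discretization: restricting prices from `[0,𝕍]` to the grid
of multiples of `η` loses at most `η` per remaining time step:
`0 ≤ U(t,s) − U^η(t,s) ≤ (T−t)·η`. -/
theorem stmt_16
    (T L : ℕ) (hL : 1 ≤ L)
    (P : ℕ → ℝ) (hPnn : ∀ ℓ, 0 ≤ P ℓ)
    (hPsum : ∑ ℓ ∈ Finset.Icc 1 L, P ℓ = 1)
    (V : ℝ) (hV : 0 < V) (η : ℝ) (hη : 0 < η)
    (q : ℝ → ℕ → ℕ → ℝ)
    (hq01 : ∀ μ s ℓ, 0 ≤ q μ s ℓ ∧ q μ s ℓ ≤ 1)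
    (hqμ : ∀ μ μ' s ℓ, μ ≤ μ' → q μ' s ℓ ≤ q μ s ℓ)
    -- optimal value function with prices in [0, V]
    (U : ℕ → ℕ → ℝ)
    (hUT : ∀ s, U T s = 0)
    (hU : ∀ t, t < T → ∀ s, U t s =
      ∑ ℓ ∈ Finset.Icc 1 L, P ℓ *
        (max 0 (⨆ μ : Set.Icc (0 : ℝ) V,
            q μ.1 s ℓ * (μ.1 + U (t + 1) (s + ℓ - 1) - U (t + 1) (s - 1)))
          + U (t + 1) (s - 1)))
    -- optimal value function with prices on the grid {k·η : k·η ≤ V}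
    (Ug : ℕ → ℕ → ℝ)
    (hUgT : ∀ s, Ug T s = 0)
    (hUg : ∀ t, t < T → ∀ s, Ug t s =
      ∑ ℓ ∈ Finset.Icc 1 L, P ℓ *
        (max 0 (⨆ k : Fin (Nat.floor (V / η) + 1),
            q (k.1 * η) s ℓ * (k.1 * η + Ug (t + 1) (s + ℓ - 1) - Ug (t + 1) (s - 1)))
          + Ug (t + 1) (s - 1))) :
    ∀ t, t ≤ T → ∀ s : ℕ,
      0 ≤ U t s - Ug t s ∧ U t s - Ug t s ≤ ((T - t : ℕ) : ℝ) * η :=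
  stmt_16_general T L P hPnn hPsum V hV η hη q hq01 hqμ U hUT hU Ug hUgT hUg
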